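/- arXiv:2209.12569 — 4 statements merged into one kernel-verified Lean document; each statement's English description precedes it below -/
import Mathlib

section
/- Let α : C₀ ⥤ C₁ and β : D₀ ⥤ D₁ be functors between small categories, and let F : C₀ ⥤ Type and G : D₀ ⥤ Type be functors. Then the left Kan extension of the external product functor (c,d) ↦ F(c) × G(d) along α × β : C₀ × D₀ ⥤ C₁ × D₁ is naturally isomorphic to the external product of the left Kan extensions, i.e. the functor (c,d) ↦ (Lan_α F)(c) × (Lan_β G)(d). -/
open CategoryTheory

universe u

/-- The external product of `F : C ⥤ Type` and `G : D ⥤ Type`, defined by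
`(c, d) ↦ F(c) × G(d)` (as the composite of `F.prod G` with the binary product
functor on `Type`, i.e. the tensor functor of the cartesian monoidal structure). -/
noncomputable def typeExtProd {C D : Type u} [SmallCategory C] [SmallCategory D]
    (F : C ⥤ Type u) (G : D ⥤ Type u) : C × D ⥤ Type u :=
  F.prod G ⋙ MonoidalCategory.tensor (Type u)


/-!
Factor `α.prod β` as `α.prod (𝟭 D₀) ⋙ (𝟭 C₁).prod β`. In `Type u` the functors `X × -` and
`- × X` are left adjoints, so they commute with the colimits computing pointwise left Kan
extensions; hence `Lan α F ⊠ G` is the left Kan extension of `F ⊠ G` along `α.prod (𝟭 D₀)`,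
`Lan α F ⊠ Lan β G` that of `Lan α F ⊠ G` along `(𝟭 C₁).prod β`, and left Kan extensions
compose.
-/

namespace CategoryTheory.MonoidalCategory.ExternalProduct

open CategoryTheory.Functor Limits

variable {V : Type*} [Category V] [MonoidalCategory V]
  {C₀ C₁ D₀ D₁ : Type*} [Category C₀] [Category C₁] [Category D₀] [Category D₁]
  {α : C₀ ⥤ C₁} {β : D₀ ⥤ D₁} {H : C₀ ⥤ V} {H' : C₁ ⥤ V} {K : D₀ ⥤ V} {K' : D₁ ⥤ V}

def prodCompTensorIsoExternalProduct (F : C₀ ⥤ V) (G : D₀ ⥤ V) :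
    F.prod G ⋙ tensor V ≅ F ⊠ G :=
  NatIso.ofComponents (fun _ ↦ Iso.refl _) (fun _ ↦ by simp [tensorHom_def])

@[simps]
def extensionUnitProd (a : H ⟶ α ⋙ H') (b : K ⟶ β ⋙ K') :
    H ⊠ K ⟶ α.prod β ⋙ H' ⊠ K' where
  app p := a.app p.1 ⊗ₘ b.app p.2
  naturality p q f := by
    dsimp
    simp only [← id_tensorHom, ← tensorHom_id, tensorHom_comp_tensorHom, Category.id_comp,
      Category.comp_id]
    exact congrArg₂ (· ⊗ₘ ·) (a.naturality f.1) (b.naturality f.2)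

theorem isLeftKanExtension_extensionUnitProd (a : H ⟶ α ⋙ H') (b : K ⟶ β ⋙ K')
    (ha : (LeftExtension.mk H' a).IsPointwiseLeftKanExtension)
    (hb : (LeftExtension.mk K' b).IsPointwiseLeftKanExtension)
    [∀ c d, PreservesColimitsOfShape (CostructuredArrow α c) (tensorRight (K.obj d))]
    [∀ c d, PreservesColimitsOfShape (CostructuredArrow β d) (tensorLeft (H'.obj c))] :
    (H' ⊠ K').IsLeftKanExtension (extensionUnitProd a b) := by
  have : (H' ⊠ K).IsLeftKanExtension (extensionUnitLeft H' a K) :=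
    (isPointwiseLeftKanExtensionExtensionUnitLeft H' a K ha).isLeftKanExtension
  have : (H' ⊠ K').IsLeftKanExtension (extensionUnitRight K' b H') :=
    (isPointwiseLeftKanExtensionExtensionUnitRight K' b H' hb).isLeftKanExtension
  refine (isLeftKanExtension_iff_postcompose (extensionUnitLeft H' a K)
    (L' := (𝟭 C₁).prod β) (α.prod β) (Iso.refl _) (extensionUnitRight K' b H') _ ?_).mp
    inferInstance
  ext p
  simp [tensorHom_def]

end CategoryTheory.MonoidalCategory.ExternalProduct

open CategoryTheory.MonoidalCategory.ExternalProduct in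
/-- Left Kan extension along `α × β` of an external product is naturally isomorphic to
the external product of the left Kan extensions. -/
theorem lan_extProd {C₀ C₁ D₀ D₁ : Type u}
    [SmallCategory C₀] [SmallCategory C₁] [SmallCategory D₀] [SmallCategory D₁]
    (α : C₀ ⥤ C₁) (β : D₀ ⥤ D₁) (F : C₀ ⥤ Type u) (G : D₀ ⥤ Type u) :
    Nonempty ((α.prod β).lan.obj (typeExtProd F G) ≅
      typeExtProd (α.lan.obj F) (β.lan.obj G)) := by
  have := isLeftKanExtension_extensionUnitProd (α.lanUnit.app F) (β.lanUnit.app G)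
    (Functor.isPointwiseLeftKanExtensionOfIsLeftKanExtension _ _)
    (Functor.isPointwiseLeftKanExtensionOfIsLeftKanExtension _ _)
  exact ⟨(α.prod β).lan.mapIso (prodCompTensorIsoExternalProduct F G) ≪≫
    Functor.leftKanExtensionUnique _ ((α.prod β).lanUnit.app (F ⊠ G)) _
      (extensionUnitProd (α.lanUnit.app F) (β.lanUnit.app G)) ≪≫
    (prodCompTensorIsoExternalProduct _ _).symm⟩
end

section
/- Let C be a small monoidal category. For objects x, y : C, the Day convolution product of the corepresentable functors Hom_C(x, −) and Hom_C(y, −) in the functor category C ⥤ Type is naturally isomorphic to the corepresentable functor Hom_C(x ⊗ y, −). -/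
open CategoryTheory Opposite MonoidalCategory

universe u

/-- The Day convolution of two functors `F G : C ⥤ Type`: the left Kan extension of the
external product `(a, b) ↦ F(a) × G(b)` along the tensor product functor `⊗ : C × C ⥤ C`. -/
noncomputable def dayConv {C : Type u} [SmallCategory C] [MonoidalCategory C]
    (F G : C ⥤ Type u) : C ⥤ Type u :=
  (MonoidalCategory.tensor C).lan.obj (F.prod G ⋙ MonoidalCategory.tensor (Type u))

/-!
The left Kan extension along any functor `K : D ⥤ C` of a corepresentable functor
`Hom_D(d, −)` is `Hom_C(K d, −)`: by Yoneda, natural transformations out of either into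
`G` are the elements of `G(K d)`. The external product of `Hom_C(x, −)` and `Hom_C(y, −)` is
the corepresentable functor `Hom_{C × C}((x, y), −)`, and `⊗` sends `(x, y)` to `x ⊗ y`.
-/

namespace CategoryTheory

universe v

section

variable {C D : Type*} [Category.{v} C] [Category.{v} D]

def coyonedaLanUnit (K : D ⥤ C) (d : D) :
    coyoneda.obj (op d) ⟶ K ⋙ coyoneda.obj (op (K.obj d)) :=
  coyonedaEquiv.symm (𝟙 (K.obj d))

lemma coyonedaEquiv_coyonedaLanUnit_comp_whiskerLeft (K : D ⥤ C) (d : D) {G : C ⥤ Type v}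
    (γ : coyoneda.obj (op (K.obj d)) ⟶ G) :
    coyonedaEquiv (coyonedaLanUnit K d ≫ Functor.whiskerLeft K γ) = coyonedaEquiv γ := by
  simp [coyonedaLanUnit, coyonedaEquiv]

instance isLeftKanExtension_coyoneda (K : D ⥤ C) (d : D) :
    (coyoneda.obj (op (K.obj d))).IsLeftKanExtension (coyonedaLanUnit K d) := by
  refine ⟨⟨Limits.IsInitial.ofUniqueHom (fun G => StructuredArrow.homMk
    ((coyonedaEquiv (F := G.right)).symm (coyonedaEquiv (F := K ⋙ G.right) G.hom)) ?_) ?_⟩⟩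
  · apply coyonedaEquiv.injective
    exact (coyonedaEquiv_coyonedaLanUnit_comp_whiskerLeft K d _).trans (Equiv.apply_symm_apply _ _)
  · intro G γ
    ext1
    apply coyonedaEquiv.injective
    refine (coyonedaEquiv_coyonedaLanUnit_comp_whiskerLeft K d γ.right).symm.trans ?_
    exact (congrArg coyonedaEquiv (StructuredArrow.w γ)).trans (Equiv.apply_symm_apply _ _).symm

noncomputable def lanObjCoyonedaIso (K : D ⥤ C) [∀ F : D ⥤ Type v, K.HasLeftKanExtension F]
    (d : D) : K.lan.obj (coyoneda.obj (op d)) ≅ coyoneda.obj (op (K.obj d)) :=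
  Functor.leftKanExtensionUnique _ (K.lanUnit.app _) _ (coyonedaLanUnit K d)

end

def coyonedaProdCompTensorIso {C : Type*} [Category.{v} C] (x y : C) :
    (coyoneda.obj (op x)).prod (coyoneda.obj (op y)) ⋙ tensor (Type v) ≅
      coyoneda.obj (op (x, y)) :=
  Iso.refl _

end CategoryTheory

/-- The Day convolution of the corepresentable functors `Hom_C(x, −)` and `Hom_C(y, −)` is
naturally isomorphic to the corepresentable functor `Hom_C(x ⊗ y, −)`. -/
theorem dayConv_coyoneda {C : Type u} [SmallCategory C] [MonoidalCategory C] (x y : C) :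
    Nonempty (dayConv (coyoneda.obj (op x)) (coyoneda.obj (op y)) ≅
      coyoneda.obj (op (x ⊗ y))) :=
  ⟨(tensor C).lan.mapIso (coyonedaProdCompTensorIso x y) ≪≫
    lanObjCoyonedaIso (tensor C) (x, y)⟩
end

section
/- Let C be a small monoidal category and F : C ⥤ Type a lax monoidal functor with unit map ε : PUnit ⟶ F(𝟙_C) and multiplication μ_{c,c'} : F(c) × F(c') ⟶ F(c ⊗ c'). Then the category of elements F.Elements carries a monoidal structure with tensor product (c, x) ⊗ (c', x') = (c ⊗ c', μ_{c,c'}(x, x')) and unit (𝟙_C, ε(*)), such that the forgetful functor F.Elements ⥤ C is strict monoidal (preserves tensor products and unit on the nose, with identity structure morphisms). -/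
/-!
A morphism `c ⟶ c'` of `C` is a morphism of elements exactly when it transports the chosen
elements. For the tensor product of two morphisms, the associator and the unitors this is the
naturality, associativity and unitality of `μ` and `ε`, evaluated at elements. Since the projection
`F.Elements ⥤ C` is faithful and preserves all of this structure on the nose, every coherence law
in `F.Elements` is the corresponding law in `C`.
-/

open CategoryTheory MonoidalCategory Functor.LaxMonoidal

universe u v₁ u₁ w

namespace CategoryTheory

namespace Functor.LaxMonoidal

variable {C : Type u₁} [Category.{v₁} C] [MonoidalCategory C] (F : C ⥤ Type w) [F.LaxMonoidal]

lemma μ_natural_apply {X X' Y Y' : C} (f : X ⟶ X') (g : Y ⟶ Y') (x : F.obj X) (y : F.obj Y) :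
    F.map (f ⊗ₘ g) (μ F X Y (x, y)) = μ F X' Y' (F.map f x, F.map g y) :=
  (types_congr_hom (μ_natural F f g) (x, y)).symm

lemma associativity_apply {X Y Z : C} (x : F.obj X) (y : F.obj Y) (z : F.obj Z) :
    F.map (α_ X Y Z).hom (μ F (X ⊗ Y) Z (μ F X Y (x, y), z)) =
      μ F X (Y ⊗ Z) (x, μ F Y Z (y, z)) :=
  types_congr_hom (associativity F X Y Z) ((x, y), z)

lemma left_unitality_apply {X : C} (x : F.obj X) :
    F.map (λ_ X).hom (μ F (𝟙_ C) X (ε F PUnit.unit, x)) = x :=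
  (types_congr_hom (left_unitality F X) (PUnit.unit, x)).symm

lemma right_unitality_apply {X : C} (x : F.obj X) :
    F.map (ρ_ X).hom (μ F X (𝟙_ C) (x, ε F PUnit.unit)) = x :=
  (types_congr_hom (right_unitality F X) (x, PUnit.unit)).symm

end Functor.LaxMonoidal

namespace CategoryOfElements

variable {C : Type u₁} [Category.{v₁} C] [MonoidalCategory C] (F : C ⥤ Type w) [F.LaxMonoidal]

instance monoidalCategory : MonoidalCategory F.Elements where
  tensorObj X Y := ⟨X.1 ⊗ Y.1, μ F X.1 Y.1 (X.2, Y.2)⟩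
  tensorUnit := ⟨𝟙_ C, ε F PUnit.unit⟩
  tensorHom u v := homMk _ _ (u.val ⊗ₘ v.val) (by rw [μ_natural_apply, u.2, v.2])
  whiskerLeft X _ _ v := homMk _ _ (X.1 ◁ v.val) (by
    rw [← id_tensorHom, μ_natural_apply, F.map_id_apply, v.2])
  whiskerRight u Y := homMk _ _ (u.val ▷ Y.1) (by
    rw [← tensorHom_id, μ_natural_apply, F.map_id_apply, u.2])
  associator X Y Z := isoMk _ _ (α_ X.1 Y.1 Z.1) (associativity_apply F X.2 Y.2 Z.2)
  leftUnitor X := isoMk _ _ (λ_ X.1) (left_unitality_apply F X.2)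
  rightUnitor X := isoMk _ _ (ρ_ X.1) (right_unitality_apply F X.2)
  tensorHom_def _ _ := ext F _ _ (MonoidalCategory.tensorHom_def _ _)
  id_tensorHom_id _ _ := ext F _ _ (id_tensorHom_id _ _)
  tensorHom_comp_tensorHom _ _ _ _ := ext F _ _ (tensorHom_comp_tensorHom _ _ _ _)
  whiskerLeft_id _ _ := ext F _ _ (whiskerLeft_id _ _)
  id_whiskerRight _ _ := ext F _ _ (id_whiskerRight _ _)
  associator_naturality _ _ _ := ext F _ _ (associator_naturality _ _ _)
  leftUnitor_naturality _ := ext F _ _ (leftUnitor_naturality _)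
  rightUnitor_naturality _ := ext F _ _ (rightUnitor_naturality _)
  pentagon _ _ _ _ := ext F _ _ (pentagon _ _ _ _)
  triangle _ _ := ext F _ _ (triangle _ _)

variable {F}

@[simp]
lemma tensorHom_val {X X' Y Y' : F.Elements} (u : X ⟶ X') (v : Y ⟶ Y') :
    (u ⊗ₘ v).val = u.val ⊗ₘ v.val :=
  rfl

@[simp]
lemma associator_hom_val (X Y Z : F.Elements) : (α_ X Y Z).hom.val = (α_ X.1 Y.1 Z.1).hom :=
  rfl

@[simp]
lemma leftUnitor_hom_val (X : F.Elements) : (λ_ X).hom.val = (λ_ X.1).hom :=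
  rfl

@[simp]
lemma rightUnitor_hom_val (X : F.Elements) : (ρ_ X).hom.val = (ρ_ X.1).hom :=
  rfl

end CategoryOfElements

end CategoryTheory

/-- For a lax monoidal functor `F : C ⥤ Type` (with unit `ε` and multiplication `μ`), the
category of elements `F.Elements` carries a monoidal structure with tensor
`(c, x) ⊗ (c', x') = (c ⊗ c', μ_{c,c'}(x, x'))` and unit `(𝟙_C, ε(*))`, such that the
forgetful functor `F.Elements ⥤ C` is strict monoidal: it preserves tensor products and
unit on the nose, and sends the associator and unitors to those of `C` (up to the
canonical `eqToHom` identifications). -/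
theorem elements_monoidal {C : Type u} [SmallCategory C] [MonoidalCategory C]
    (F : C ⥤ Type u) [F.LaxMonoidal] :
    ∃ M : MonoidalCategory F.Elements,
      ∃ hobj : ∀ X Y : F.Elements,
          M.tensorObj X Y = ⟨X.1 ⊗ Y.1, μ F X.1 Y.1 (X.2, Y.2)⟩,
      ∃ hunit : M.tensorUnit = ⟨𝟙_ C, ε F PUnit.unit⟩,
        (∀ {X X' Y Y' : F.Elements} (u : X ⟶ X') (v : Y ⟶ Y'),
          (M.tensorHom u v).val =
            eqToHom (congrArg Sigma.fst (hobj X Y)) ≫ (u.val ⊗ₘ v.val) ≫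
              eqToHom (congrArg Sigma.fst (hobj X' Y')).symm) ∧
        (∀ X Y Z : F.Elements,
          (M.associator X Y Z).hom.val =
            eqToHom (by rw [hobj, hobj]) ≫ (α_ X.1 Y.1 Z.1).hom ≫
              eqToHom (by rw [hobj, hobj]) ) ∧
        (∀ X : F.Elements,
          (M.leftUnitor X).hom.val =
            eqToHom (by rw [hobj, hunit]) ≫ (λ_ X.1).hom) ∧
        (∀ X : F.Elements,
          (M.rightUnitor X).hom.val =
            eqToHom (by rw [hobj, hunit]) ≫ (ρ_ X.1).hom) := by
  refine ⟨CategoryOfElements.monoidalCategory F, fun _ _ => rfl, rfl, ?_, ?_, ?_, ?_⟩ <;>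
    intros <;> simp
end

section
/- Let S be a small category, and let P : X ⥤ S and Q : Y ⥤ S be Grothendieck opfibrations, and p : X ⥤ Y a functor over S (Q ∘ p = P) sending P-strongly-cocartesian morphisms to Q-strongly-cocartesian morphisms. Suppose that for every object s of S the induced functor on fibers p_s : X_s ⥤ Y_s is a Grothendieck opfibration, and that for every morphism e : s ⟶ t the pushforward functor e_! : X_s ⥤ X_t sends p_s-strongly-cocartesian morphisms to p_t-strongly-cocartesian morphisms. Then p : X ⥤ Y is a Grothendieck opfibration. -/
open CategoryTheory

universe u

variable {S X Y : Type u} [SmallCategory S] [SmallCategory X] [SmallCategory Y]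

/-- A functor is a Grothendieck opfibration if every morphism out of the image of an
object admits a strongly cocartesian lift. -/
def IsOpfibration {A B : Type u} [SmallCategory A] [SmallCategory B] (P : A ⥤ B) : Prop :=
  ∀ ⦃a : A⦄ ⦃s : B⦄ (f : P.obj a ⟶ s), ∃ (b : A) (φ : a ⟶ b), P.IsStronglyCocartesian f φ

/-- For a functor `p : X ⥤ Y` over `S` (with `P : X ⥤ S` and `Q : Y ⥤ S` the structure
functors), a morphism `φ` of `X` lying in the fiber over `s : S` is strongly cocartesian
for the induced functor `p_s : X_s ⥤ Y_s` on fibers if every vertical morphism `h` out of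
its source factoring through `p(φ)` by a vertical morphism `g` of `Y_s` admits a unique
vertical lift `k` of `g` with `φ ≫ k = h`. -/
def FiberwiseStronglyCocartesian (P : X ⥤ S) (p : X ⥤ Y) (Q : Y ⥤ S) (s : S)
    {a b : X} (φ : a ⟶ b) : Prop :=
  P.IsHomLift (𝟙 s) φ ∧
    ∀ (c : X) (h : a ⟶ c) (g : p.obj b ⟶ p.obj c),
      P.IsHomLift (𝟙 s) h → Q.IsHomLift (𝟙 s) g → p.map φ ≫ g = p.map h →
        ∃! k : b ⟶ c, P.IsHomLift (𝟙 s) k ∧ p.map k = g ∧ φ ≫ k = h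

/-! Given `f : p a ⟶ y`, take a `P`-cocartesian lift `α : a ⟶ a'` of `Q f`. Since `p α` is
`Q`-cocartesian, `f = p α ≫ g₀` with `g₀` vertical, and a fiberwise cocartesian lift `φ` of `g₀`
yields the candidate `α ≫ φ`. The morphism `α` is `p`-cocartesian because it is `P`-cocartesian
with `Q`-cocartesian image. For `φ`, a morphism lying over an arbitrary `g` out of `p b` is
transported along the cocartesian lifts of `Q g`: this turns the universal property of `φ` into the
fiberwise universal property of the pushforward of `φ` along `Q g`, which holds by assumption. -/

namespace CategoryTheory

variable {𝒳 𝒴 𝒮 : Type*} [Category 𝒳] [Category 𝒴] [Category 𝒮]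

lemma isHomLift_comp_iff (p : 𝒳 ⥤ 𝒴) (Q : 𝒴 ⥤ 𝒮) {R T : 𝒮} (f : R ⟶ T) {a b : 𝒳}
    (φ : a ⟶ b) : (p ⋙ Q).IsHomLift f φ ↔ Q.IsHomLift f (p.map φ) := by
  constructor
  · rintro ⟨⟩
    exact IsHomLift.map Q (p.map φ)
  · intro h
    exact IsHomLift.of_fac' (p ⋙ Q) f φ (IsHomLift.domain_eq Q f (p.map φ))
      (IsHomLift.codomain_eq Q f (p.map φ)) (IsHomLift.fac' Q f (p.map φ))

instance isHomLift_map_of_isHomLift_comp (p : 𝒳 ⥤ 𝒴) (Q : 𝒴 ⥤ 𝒮) {R T : 𝒮} (f : R ⟶ T)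
    {a b : 𝒳} (φ : a ⟶ b) [h : (p ⋙ Q).IsHomLift f φ] : Q.IsHomLift f (p.map φ) :=
  (isHomLift_comp_iff p Q f φ).mp h

lemma isHomLift_comp_of_isHomLift {p : 𝒳 ⥤ 𝒴} (Q : 𝒴 ⥤ 𝒮) {R T : 𝒴} {f : R ⟶ T} {a b : 𝒳}
    {φ : a ⟶ b} (h : p.IsHomLift f φ) : (p ⋙ Q).IsHomLift (Q.map f) φ := by
  obtain ⟨⟩ := h
  exact IsHomLift.map (p ⋙ Q) φ

lemma Functor.IsStronglyCocartesian.of_isHomLift {F : 𝒳 ⥤ 𝒮} {R T R' T' : 𝒮} {f : R ⟶ T}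
    (f' : R' ⟶ T') {a b : 𝒳} {φ : a ⟶ b} (h : F.IsStronglyCocartesian f φ)
    [hf' : F.IsHomLift f' φ] : F.IsStronglyCocartesian f' φ := by
  have hf := h.toIsHomLift
  revert h
  obtain ⟨⟩ := hf
  obtain ⟨⟩ := hf'
  exact id

lemma isStronglyCocartesian_of_comp_of_map (p : 𝒳 ⥤ 𝒴) (Q : 𝒴 ⥤ 𝒮) {a b : 𝒳} (α : a ⟶ b)
    [(p ⋙ Q).IsStronglyCocartesian (Q.map (p.map α)) α]
    [Q.IsStronglyCocartesian (Q.map (p.map α)) (p.map α)] :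
    p.IsStronglyCocartesian (p.map α) α where
  universal_property' {c} g ψ _ := by
    have hpψ : p.map ψ = p.map α ≫ g := (IsHomLift.eq_of_isHomLift p _ ψ).symm
    have : (p ⋙ Q).IsHomLift (Q.map (p.map α) ≫ Q.map g) ψ := by
      rw [isHomLift_comp_iff, hpψ]
      infer_instance
    obtain ⟨χ, ⟨hχ, hαχ⟩, huniq⟩ :=
      Functor.IsStronglyCocartesian.universal_property (p ⋙ Q) (Q.map (p.map α)) α (Q.map g) _ rfl ψ
    have hpχ : p.map χ = g :=
      Functor.IsStronglyCocartesian.ext Q (Q.map (p.map α)) (p.map α) (Q.map g)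
        (by rw [← p.map_comp, hαχ, hpψ])
    exact ⟨χ, ⟨hpχ ▸ IsHomLift.map p χ, hαχ⟩,
      fun χ' ⟨hχ', hαχ'⟩ ↦ huniq χ' ⟨isHomLift_comp_of_isHomLift Q hχ', hαχ'⟩⟩

lemma Functor.IsStronglyCocartesian.existsUnique_isHomLift_comp_iff {p : 𝒳 ⥤ 𝒮} {R T U : 𝒮}
    {f : R ⟶ T} {b b' c : 𝒳} (β : b ⟶ b') [p.IsStronglyCocartesian f β] (g : T ⟶ U)
    (r : (b ⟶ c) → Prop) :
    (∃! χ : b ⟶ c, p.IsHomLift (f ≫ g) χ ∧ r χ) ↔ ∃! k : b' ⟶ c, p.IsHomLift g k ∧ r (β ≫ k) := by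
  constructor
  · rintro ⟨χ, ⟨hχ, hrχ⟩, huniq⟩
    obtain ⟨k, ⟨hk, rfl⟩, hk_uniq⟩ := universal_property p f β g (f ≫ g) rfl χ
    exact ⟨k, ⟨hk, hrχ⟩, fun k' ⟨hk', hrk'⟩ ↦ hk_uniq k' ⟨hk', huniq _ ⟨inferInstance, hrk'⟩⟩⟩
  · rintro ⟨k, ⟨hk, hrk⟩, hk_uniq⟩
    refine ⟨β ≫ k, ⟨inferInstance, hrk⟩, fun χ ⟨hχ, hrχ⟩ ↦ ?_⟩
    obtain ⟨k', ⟨hk', rfl⟩, -⟩ := universal_property p f β g (f ≫ g) rfl χ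
    rw [hk_uniq k' ⟨hk', hrχ⟩]

end CategoryTheory

open CategoryTheory Functor

section

variable (p : X ⥤ Y) (Q : Y ⥤ S)

lemma exists_isStronglyCocartesian_lift (hP : IsOpfibration (p ⋙ Q))
    (hpres : ∀ {a b : X} (φ : a ⟶ b), (p ⋙ Q).IsStronglyCocartesian ((p ⋙ Q).map φ) φ →
      Q.IsStronglyCocartesian (Q.map (p.map φ)) (p.map φ))
    {a : X} {R T : S} (e : R ⟶ T) (ha : (p ⋙ Q).obj a = R) :
    ∃ (b : X) (α : a ⟶ b), (p ⋙ Q).IsStronglyCocartesian e α ∧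
      Q.IsStronglyCocartesian e (p.map α) ∧ p.IsStronglyCocartesian (p.map α) α := by
  subst ha
  obtain ⟨b, α, hα⟩ := hP e
  have hαP : (p ⋙ Q).IsStronglyCocartesian (Q.map (p.map α)) α :=
    hα.of_isHomLift (hf' := IsHomLift.map (p ⋙ Q) α) _
  have hαQ : Q.IsStronglyCocartesian (Q.map (p.map α)) (p.map α) := hpres α hαP
  exact ⟨b, α, hα, hαQ.of_isHomLift e, isStronglyCocartesian_of_comp_of_map p Q α⟩

lemma isStronglyCocartesian_of_fiberwiseStronglyCocartesian (hP : IsOpfibration (p ⋙ Q))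
    (hpres : ∀ {a b : X} (φ : a ⟶ b), (p ⋙ Q).IsStronglyCocartesian ((p ⋙ Q).map φ) φ →
      Q.IsStronglyCocartesian (Q.map (p.map φ)) (p.map φ))
    (hpush : ∀ {s t : S} (e : s ⟶ t) {a b a' b' : X} (φ : a ⟶ b)
      (α : a ⟶ a') (β : b ⟶ b') (ψ : a' ⟶ b'),
      FiberwiseStronglyCocartesian (p ⋙ Q) p Q s φ →
      (p ⋙ Q).IsStronglyCocartesian e α → (p ⋙ Q).IsStronglyCocartesian e β →
      (p ⋙ Q).IsHomLift (𝟙 t) ψ → α ≫ ψ = φ ≫ β →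
      FiberwiseStronglyCocartesian (p ⋙ Q) p Q t ψ)
    {s : S} {a b : X} {φ : a ⟶ b} (hφ : FiberwiseStronglyCocartesian (p ⋙ Q) p Q s φ) :
    p.IsStronglyCocartesian (p.map φ) φ where
  universal_property' {c} g ψ _ := by
    have hφs := hφ.1
    obtain rfl : Q.obj (p.obj b) = s := IsHomLift.codomain_eq (p ⋙ Q) (𝟙 s) φ
    obtain ⟨a', α, hαP, hαQ, -⟩ := exists_isStronglyCocartesian_lift p Q hP hpres (Q.map g)
      (IsHomLift.domain_eq (p ⋙ Q) (𝟙 _) φ)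
    obtain ⟨b', β, hβP, hβQ, hβp⟩ :=
      exists_isStronglyCocartesian_lift p Q hP hpres (Q.map g) rfl
    -- `ρ` is the pushforward of `φ` along `Q.map g`
    let ρ := IsCocartesian.map (p ⋙ Q) (Q.map g) α (φ ≫ β)
    have hρ : α ≫ ρ = φ ≫ β := IsCocartesian.fac (p ⋙ Q) (Q.map g) α (φ ≫ β)
    have hρ_fib := hpush (Q.map g) φ α β ρ hφ hαP hβP inferInstance hρ
    have hpψ : p.map ψ = p.map φ ≫ g := (IsHomLift.eq_of_isHomLift p _ ψ).symm
    have : (p ⋙ Q).IsHomLift (Q.map g) ψ := by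
      rw [isHomLift_comp_iff, hpψ]
      infer_instance
    let ψ' := IsCocartesian.map (p ⋙ Q) (Q.map g) α ψ
    have hψ' : α ≫ ψ' = ψ := IsCocartesian.fac (p ⋙ Q) (Q.map g) α ψ
    let g' := IsCocartesian.map Q (Q.map g) (p.map β) g
    have hg' : p.map β ≫ g' = g := IsCocartesian.fac Q (Q.map g) (p.map β) g
    have hρ_g' : p.map ρ ≫ g' = p.map ψ' := by
      apply IsStronglyCocartesian.ext Q (Q.map g) (p.map α) (𝟙 _)
      rw [← p.map_comp_assoc, hρ, p.map_comp_assoc, hg', ← hpψ, ← p.map_comp, hψ']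
    rw [← hg', IsStronglyCocartesian.existsUnique_isHomLift_comp_iff β]
    refine (existsUnique_congr fun k ↦ ?_).mpr
      (hρ_fib.2 c ψ' g' inferInstance inferInstance hρ_g')
    constructor
    · rintro ⟨hk, hφk⟩
      have hpk : p.map k = g' := (IsHomLift.eq_of_isHomLift p g' k).symm
      have hkQ : Q.IsHomLift (𝟙 (Q.obj (p.obj c))) (p.map k) := by rw [hpk]; infer_instance
      have hkP := (isHomLift_comp_iff p Q _ k).mpr hkQ
      refine ⟨hkP, hpk, ?_⟩
      apply IsStronglyCocartesian.ext (p ⋙ Q) (Q.map g) α (𝟙 _)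
      rw [reassoc_of% hρ, hφk, hψ']
    · rintro ⟨hk, hpk, hρk⟩
      exact ⟨hpk ▸ IsHomLift.map p k, by rw [← reassoc_of% hρ, hρk, hψ']⟩

end

theorem isOpfibration_of_fiberwise_general (P : X ⥤ S) (Q : Y ⥤ S) (p : X ⥤ Y)
    (hP : IsOpfibration P)
    (hcomm : p ⋙ Q = P)
    -- `p` sends `P`-strongly cocartesian morphisms to `Q`-strongly cocartesian ones:
    (hpres : ∀ {a b : X} (φ : a ⟶ b), P.IsStronglyCocartesian (P.map φ) φ →
      Q.IsStronglyCocartesian (Q.map (p.map φ)) (p.map φ))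
    -- each induced functor on fibers `p_s : X_s ⥤ Y_s` is an opfibration:
    (hfib : ∀ (s : S) (a : X), P.obj a = s → ∀ (y : Y) (g : p.obj a ⟶ y),
      Q.IsHomLift (𝟙 s) g →
        ∃ (b : X) (φ : a ⟶ b) (hb : p.obj b = y),
          FiberwiseStronglyCocartesian P p Q s φ ∧ p.map φ ≫ eqToHom hb = g)
    -- pushforward along `e : s ⟶ t` preserves fiberwise strongly cocartesian morphisms:
    (hpush : ∀ {s t : S} (e : s ⟶ t) {a b a' b' : X} (φ : a ⟶ b)
      (α : a ⟶ a') (β : b ⟶ b') (ψ : a' ⟶ b'),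
      FiberwiseStronglyCocartesian P p Q s φ →
      P.IsStronglyCocartesian e α → P.IsStronglyCocartesian e β →
      P.IsHomLift (𝟙 t) ψ → α ≫ ψ = φ ≫ β →
      FiberwiseStronglyCocartesian P p Q t ψ) :
    IsOpfibration p := by
  subst hcomm
  intro a y f
  obtain ⟨a', α, -, hαQ, hαp⟩ := exists_isStronglyCocartesian_lift p Q hP hpres (Q.map f) rfl
  let g₀ := IsCocartesian.map Q (Q.map f) (p.map α) f
  have hg₀ : p.map α ≫ g₀ = f := IsCocartesian.fac Q (Q.map f) (p.map α) f
  obtain ⟨b, φ, hb, hφ, hφg₀⟩ :=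
    hfib _ a' (IsHomLift.codomain_eq Q (Q.map f) (p.map α)) y g₀ inferInstance
  have hφp := isStronglyCocartesian_of_fiberwiseStronglyCocartesian p Q hP hpres hpush hφ
  have hαφ : p.IsStronglyCocartesian (p.map α ≫ p.map φ) (α ≫ φ) := inferInstance
  have : p.IsHomLift f (α ≫ φ) := by
    rw [← hg₀, ← hφg₀]
    infer_instance
  exact ⟨b, α ≫ φ, hαφ.of_isHomLift f⟩

/-- **Gluing lemma for opfibrations.** Let `P : X ⥤ S` and `Q : Y ⥤ S` be Grothendieck
opfibrations and `p : X ⥤ Y` a functor over `S` preserving strongly cocartesian morphisms.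
If the induced functor on each fiber is an opfibration, and pushforward along any morphism
of `S` preserves fiberwise strongly cocartesian morphisms, then `p` is a Grothendieck
opfibration. -/
theorem isOpfibration_of_fiberwise (P : X ⥤ S) (Q : Y ⥤ S) (p : X ⥤ Y)
    (hP : IsOpfibration P) (hQ : IsOpfibration Q)
    (hcomm : p ⋙ Q = P)
    -- `p` sends `P`-strongly cocartesian morphisms to `Q`-strongly cocartesian ones:
    (hpres : ∀ {a b : X} (φ : a ⟶ b), P.IsStronglyCocartesian (P.map φ) φ →
      Q.IsStronglyCocartesian (Q.map (p.map φ)) (p.map φ))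
    -- each induced functor on fibers `p_s : X_s ⥤ Y_s` is an opfibration:
    (hfib : ∀ (s : S) (a : X), P.obj a = s → ∀ (y : Y) (g : p.obj a ⟶ y),
      Q.IsHomLift (𝟙 s) g →
        ∃ (b : X) (φ : a ⟶ b) (hb : p.obj b = y),
          FiberwiseStronglyCocartesian P p Q s φ ∧ p.map φ ≫ eqToHom hb = g)
    -- pushforward along `e : s ⟶ t` preserves fiberwise strongly cocartesian morphisms:
    (hpush : ∀ {s t : S} (e : s ⟶ t) {a b a' b' : X} (φ : a ⟶ b)
      (α : a ⟶ a') (β : b ⟶ b') (ψ : a' ⟶ b'),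
      FiberwiseStronglyCocartesian P p Q s φ →
      P.IsStronglyCocartesian e α → P.IsStronglyCocartesian e β →
      P.IsHomLift (𝟙 t) ψ → α ≫ ψ = φ ≫ β →
      FiberwiseStronglyCocartesian P p Q t ψ) :
    IsOpfibration p :=
  isOpfibration_of_fiberwise_general P Q p hP hcomm hpres hfib hpush
end
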